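/- arXiv:2209.10272 — 3 statements merged into one kernel-verified Lean document; each statement's English description precedes it below -/
import Mathlib

section
/- Let G be a data graph, let Q be a BGP query, and let D_CV(Q) = (Q_1, Q_2, …, Q_n) be the connected-variable decomposition of Q. If e_1, e_2, …, e_n are total embeddings of Q_1, Q_2, …, Q_n respectively in G, then e_1, e_2, …, e_n are pairwise compatible partial embeddings of Q in G, and e = e_1 ⊗ e_2 ⊗ … ⊗ e_n is a total embedding of Q in G. -/
/-!
Formalization of BGP queries over Linked Data graphs.

Nodes are drawn from a type `N`, predicates from a type `P`.
`Uso` is the set of URIs usable as subjects/objects, `Lit` the set of literals,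
`Var` the set of variables.  Partial mappings are modelled as `N → Option N`.
-/

namespace RDFBGP

variable {N P : Type}

/-- A triple (subject, predicate, object). -/
abbrev Triple (N P : Type) := N × P × N

/-- Subject of a triple. -/
def subj (t : Triple N P) : N := t.1

/-- Predicate of a triple. -/
def pred (t : Triple N P) : P := t.2.1

/-- Object of a triple. -/
def obj (t : Triple N P) : N := t.2.2

/-- The set of nodes (subjects and objects) of a set of triples. -/
def nodes (Q : Set (Triple N P)) : Set N := {v | ∃ t ∈ Q, subj t = v ∨ obj t = v}

/-- The variables of a query: its nodes that lie in `Var`. -/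
def varsOf (Var : Set N) (Q : Set (Triple N P)) : Set N := nodes Q ∩ Var

/-- A data graph: a nonempty set of data triples (subjects are URIs, objects URIs or
literals; no variables occur). -/
def IsDataGraph (Uso Lit : Set N) (G : Set (Triple N P)) : Prop :=
  G.Nonempty ∧ ∀ t ∈ G, subj t ∈ Uso ∧ obj t ∈ Uso ∪ Lit

/-- A BGP query: a nonempty set of query triples (subjects are URIs or variables,
objects are URIs, literals or variables). -/
def IsBGP (Uso Lit Var : Set N) (Q : Set (Triple N P)) : Prop :=
  Q.Nonempty ∧ ∀ t ∈ Q, subj t ∈ Uso ∪ Var ∧ obj t ∈ Uso ∪ Lit ∪ Var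

/-- A query is ground if it contains no variables. -/
def Ground (Var : Set N) (Q : Set (Triple N P)) : Prop := varsOf Var Q = ∅

/-- Two nodes are adjacent in `Q` if some triple of `Q` connects them (in either
direction). -/
def adjStep (Q : Set (Triple N P)) (u v : N) : Prop :=
  ∃ p : P, (u, p, v) ∈ Q ∨ (v, p, u) ∈ Q

/-- `vs` is the node sequence of a generalized path in `Q`: at least two pairwise
distinct nodes, consecutive nodes connected by triples of `Q` (in either direction). -/
def IsGenPathSeq (Q : Set (Triple N P)) (vs : List N) : Prop :=
  2 ≤ vs.length ∧ vs.Nodup ∧ vs.Chain' (adjStep Q)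

/-- `vs` is the node sequence of a generalized path in `Q` between `u` and `v`. -/
def GenPathBetween (Q : Set (Triple N P)) (u v : N) (vs : List N) : Prop :=
  IsGenPathSeq Q vs ∧ vs.head? = some u ∧ vs.getLast? = some v

/-- `Part` is a connected-variable partition of the set of variables of `Q`:
a partition of `varsOf Var Q` such that (1) any two distinct variables of a class are
connected by a generalized path all of whose nodes are variables of that class, and
(2) no triple of `Q` has a variable of one class as subject and a variable of a
different class as object. -/
def IsCVPartition (Var : Set N) (Q : Set (Triple N P)) (Part : Set (Set N)) : Prop :=
  (∀ Pi ∈ Part, Pi.Nonempty) ∧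
  (⋃₀ Part = varsOf Var Q) ∧
  (∀ Pi ∈ Part, ∀ Pj ∈ Part, Pi ≠ Pj → Disjoint Pi Pj) ∧
  (∀ Pi ∈ Part, ∀ u ∈ Pi, ∀ v ∈ Pi, u ≠ v →
      ∃ vs, GenPathBetween Q u v vs ∧ ∀ w ∈ vs, w ∈ Pi) ∧
  (∀ Pi ∈ Part, ∀ Pj ∈ Part, Pi ≠ Pj →
      ¬ ∃ t ∈ Q, (subj t ∈ Pi ∧ obj t ∈ Pj) ∨ (subj t ∈ Pj ∧ obj t ∈ Pi))

/-- `Q` is loosely-connected: every generalized path between two distinct variables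
contains at least one non-variable node. -/
def LooselyConnected (Var : Set N) (Q : Set (Triple N P)) : Prop :=
  ∀ X ∈ varsOf Var Q, ∀ Y ∈ varsOf Var Q, X ≠ Y →
    ∀ vs, GenPathBetween Q X Y vs → ∃ w ∈ vs, w ∉ Var

/-- The subquery of `Q` induced by a class `Pi` of variables:
`Q_{P_i} = { (s,p,o) ∈ Q : s ∈ P_i or o ∈ P_i }`. -/
def classQuery (Q : Set (Triple N P)) (Pi : Set N) : Set (Triple N P) :=
  {t ∈ Q | subj t ∈ Pi ∨ obj t ∈ Pi}

/-- The ground remainder `Q_G = Q \ ∪_i Q_{P_i}`. -/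
def groundRest (Q : Set (Triple N P)) (Part : Set (Set N)) : Set (Triple N P) :=
  Q \ ⋃ Pi ∈ Part, classQuery Q Pi

/-- The connected-variable decomposition of `Q` w.r.t. the connected-variable
partition `Part`: the queries `Q_{P_i}` together with the ground query `Q_G` when it
is nonempty. -/
def DCV (Q : Set (Triple N P)) (Part : Set (Set N)) : Set (Set (Triple N P)) :=
  {Qi | ∃ Pi ∈ Part, Qi = classQuery Q Pi} ∪
    {Qg | Qg = groundRest Q Part ∧ Qg.Nonempty}

/-- A simple var-centric (generalized) star query: there is a central node `c` which
is a variable, every triple has `c` as subject or object, and every node adjacent to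
`c` is a constant. -/
def SimpleVarCentricStar (Var : Set N) (Q : Set (Triple N P)) : Prop :=
  ∃ c ∈ nodes Q, c ∈ Var ∧
    (∀ t ∈ Q, subj t = c ∨ obj t = c) ∧
    (∀ t ∈ Q, (subj t = c → obj t ∉ Var) ∧ (obj t = c → subj t ∉ Var))

/-- A total embedding of `Q` in `G`: a mapping defined exactly on the nodes of `Q`,
fixing every non-variable node, and mapping every triple of `Q` into a triple of `G`. -/
def TotalEmb (Var : Set N) (Q G : Set (Triple N P)) (e : N → Option N) : Prop :=
  (∀ v, (e v).isSome ↔ v ∈ nodes Q) ∧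
  (∀ v ∈ nodes Q, v ∉ Var → e v = some v) ∧
  (∀ t ∈ Q, ∃ s' o', e (subj t) = some s' ∧ e (obj t) = some o' ∧
      (s', pred t, o') ∈ G)

/-- A partial embedding of `Q` in `G`: a partial mapping on the nodes of `Q`,
fixing every non-variable node on which it is defined, and mapping every triple of
`Q` both of whose endpoints are defined into a triple of `G`. -/
def PartialEmb (Var : Set N) (Q G : Set (Triple N P)) (e : N → Option N) : Prop :=
  (∀ v, (e v).isSome → v ∈ nodes Q) ∧
  (∀ v ∈ nodes Q, v ∉ Var → ∀ w, e v = some w → w = v) ∧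
  (∀ t ∈ Q, ∀ s' o', e (subj t) = some s' → e (obj t) = some o' →
      (s', pred t, o') ∈ G)

/-- Two partial mappings are compatible if they agree wherever both are defined. -/
def Compatible (e₁ e₂ : N → Option N) : Prop :=
  ∀ v a b, e₁ v = some a → e₂ v = some b → a = b

/-- The join `e₁ ⊗ e₂` of two partial mappings: agrees with `e₁` wherever `e₁` is
defined and with `e₂` wherever `e₂` is defined and `e₁` is not. -/
def pjoin (e₁ e₂ : N → Option N) : N → Option N :=
  fun v => (e₁ v).elim (e₂ v) some

/-- The iterated join `e₁ ⊗ e₂ ⊗ … ⊗ eₙ` of a list of partial mappings. -/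
def pjoinList (l : List (N → Option N)) : N → Option N :=
  l.foldr pjoin (fun _ => none)

open Classical in
/-- The restriction of a partial mapping to a set of nodes. -/
noncomputable def restrictTo (S : Set N) (e : N → Option N) : N → Option N :=
  fun v => if v ∈ S then e v else none

open Classical in
/-- The identity partial mapping on a set of nodes. -/
noncomputable def idOn (S : Set N) : N → Option N :=
  fun v => if v ∈ S then some v else none

/-- The answer determined by an embedding: its restriction to the variables of `Q`. -/
noncomputable def answerOf (Var : Set N) (Q : Set (Triple N P)) (e : N → Option N) :
    N → Option N :=
  restrictTo (varsOf Var Q) e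

/-- The set of answers of `Q` over `G`. -/
def answers (Var : Set N) (Q G : Set (Triple N P)) : Set (N → Option N) :=
  {a | ∃ e, TotalEmb Var Q G e ∧ a = answerOf Var Q e}

open Classical in
/-- Substituting the constant `c` for the variable `X` in a triple. -/
noncomputable def substTriple (X c : N) (t : Triple N P) : Triple N P :=
  ((if t.1 = X then c else t.1), t.2.1, (if t.2.2 = X then c else t.2.2))

/-- The query `Q[X := c]` obtained by replacing every occurrence of `X` by `c`. -/
noncomputable def substQuery (X c : N) (Q : Set (Triple N P)) : Set (Triple N P) :=
  substTriple X c '' Q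

end RDFBGP

/-!
Every member of the connected-variable decomposition is a subquery of `Q`, and together
they cover `Q`. Since no triple joins two different classes, a variable occurring in
`Q_{P_i}` lies in `P_i`, so two distinct members share only constants and `Q_G` has no
variables at all. Hence total embeddings of distinct members agree wherever both are
defined (constants are fixed), and a triple of `Q` whose endpoints are both mapped by
`e_i` either lies in `Q_i` or is ground, in which case it is already a triple of `G`
(it lies in some member, whose embedding fixes it). The join of pairwise compatible
mappings agrees with each of them.
-/

namespace RDFBGP

variable {N P : Type}

section Join

lemma compatible_refl (e : N → Option N) : Compatible e e := fun _ _ _ ha hb =>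
  Option.some_inj.mp (ha.symm.trans hb)

lemma exists_mem_of_pjoinList_eq_some {l : List (N → Option N)} {v a : N}
    (h : pjoinList l v = some a) : ∃ e ∈ l, e v = some a := by
  induction l with
  | nil => simp [pjoinList] at h
  | cons e l ih =>
    cases he : e v with
    | none =>
      obtain ⟨e', he', hv⟩ := ih (by simpa [pjoinList, pjoin, he] using h)
      exact ⟨e', List.mem_cons_of_mem _ he', hv⟩
    | some b =>
      simp only [pjoinList, List.foldr_cons, pjoin, he, Option.elim] at h
      exact ⟨e, List.mem_cons_self, he.trans h⟩

lemma isSome_pjoinList_of_mem {l : List (N → Option N)} {v : N} {e : N → Option N}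
    (he : e ∈ l) (h : (e v).isSome) : (pjoinList l v).isSome := by
  induction l with
  | nil => simp at he
  | cons e' l ih =>
    cases he' : e' v with
    | some b => simp [pjoinList, pjoin, he']
    | none =>
      simp only [pjoinList, List.foldr_cons, pjoin, he', Option.elim]
      rcases List.mem_cons.mp he with rfl | he
      · simp [he'] at h
      · exact ih he

lemma isSome_pjoinList_iff {l : List (N → Option N)} {v : N} :
    (pjoinList l v).isSome ↔ ∃ e ∈ l, (e v).isSome := by
  refine ⟨fun h => ?_, fun ⟨e, he, hv⟩ => isSome_pjoinList_of_mem he hv⟩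
  obtain ⟨a, ha⟩ := Option.isSome_iff_exists.mp h
  obtain ⟨e, he, hv⟩ := exists_mem_of_pjoinList_eq_some ha
  exact ⟨e, he, by simp [hv]⟩

lemma pjoinList_eq_some_of_mem {l : List (N → Option N)} {v a : N} {e : N → Option N}
    (hcompat : ∀ e₁ ∈ l, ∀ e₂ ∈ l, Compatible e₁ e₂) (he : e ∈ l) (hv : e v = some a) :
    pjoinList l v = some a := by
  obtain ⟨b, hb⟩ := Option.isSome_iff_exists.mp (isSome_pjoinList_of_mem (v := v) he (by rw [hv]; rfl))
  obtain ⟨e', he', hv'⟩ := exists_mem_of_pjoinList_eq_some hb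
  rw [hb, hcompat e' he' e he v b a hv' hv]

end Join

section Embedding

variable {Var : Set N} {Q Q' G : Set (Triple N P)} {e : N → Option N}

lemma nodes_mono (h : Q' ⊆ Q) : nodes Q' ⊆ nodes Q := fun _ ⟨t, ht, hv⟩ => ⟨t, h ht, hv⟩

lemma TotalEmb.mem_nodes_of_eq_some (he : TotalEmb Var Q G e) {v a : N}
    (hv : e v = some a) : v ∈ nodes Q :=
  (he.1 v).mp (by simp [hv])

lemma TotalEmb.eq_of_eq_some (he : TotalEmb Var Q G e) {v a : N} (hv : e v = some a)
    (hvar : v ∉ Var) : a = v :=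
  Option.some_inj.mp (hv.symm.trans (he.2.1 v (he.mem_nodes_of_eq_some hv) hvar))

lemma TotalEmb.mem_of_ground (he : TotalEmb Var Q G e) {t : Triple N P} (ht : t ∈ Q)
    (hs : subj t ∉ Var) (ho : obj t ∉ Var) : t ∈ G := by
  obtain ⟨s', o', hs', ho', hG⟩ := he.2.2 t ht
  rwa [he.eq_of_eq_some hs' hs, he.eq_of_eq_some ho' ho] at hG

lemma TotalEmb.compatible {Q₁ Q₂ : Set (Triple N P)} {e₁ e₂ : N → Option N}
    (he₁ : TotalEmb Var Q₁ G e₁) (he₂ : TotalEmb Var Q₂ G e₂)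
    (hshared : ∀ v ∈ nodes Q₁, v ∈ nodes Q₂ → v ∉ Var) : Compatible e₁ e₂ := by
  intro v a b ha hb
  have hvar := hshared v (he₁.mem_nodes_of_eq_some ha) (he₂.mem_nodes_of_eq_some hb)
  rw [he₁.eq_of_eq_some ha hvar, he₂.eq_of_eq_some hb hvar]

lemma TotalEmb.partialEmb (he : TotalEmb Var Q' G e) (hsub : Q' ⊆ Q)
    (hclosed : ∀ t ∈ Q, subj t ∈ nodes Q' → obj t ∈ nodes Q' →
      t ∈ Q' ∨ (subj t ∉ Var ∧ obj t ∉ Var))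
    (hground : ∀ t ∈ Q, subj t ∉ Var → obj t ∉ Var → t ∈ G) :
    PartialEmb Var Q G e := by
  refine ⟨fun v hv => nodes_mono hsub ((he.1 v).mp hv),
    fun v _ hvar w hw => he.eq_of_eq_some hw hvar, fun t ht s' o' hs' ho' => ?_⟩
  rcases hclosed t ht (he.mem_nodes_of_eq_some hs') (he.mem_nodes_of_eq_some ho') with
    htQ' | ⟨hs, ho⟩
  · obtain ⟨s'', o'', hs'', ho'', hG⟩ := he.2.2 t htQ'
    rwa [Option.some_inj.mp (hs''.symm.trans hs'), Option.some_inj.mp (ho''.symm.trans ho')]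
      at hG
  · rw [he.eq_of_eq_some hs' hs, he.eq_of_eq_some ho' ho]
    exact hground t ht hs ho

lemma totalEmb_pjoinList_ofFn {n : ℕ} {Qs : Fin n → Set (Triple N P)}
    {es : Fin n → N → Option N} (hemb : ∀ i, TotalEmb Var (Qs i) G (es i))
    (hcompat : ∀ i j, Compatible (es i) (es j))
    (hsub : ∀ i, Qs i ⊆ Q) (hcover : ∀ t ∈ Q, ∃ i, t ∈ Qs i) :
    TotalEmb Var Q G (pjoinList (List.ofFn es)) := by
  have hcompat' : ∀ e₁ ∈ List.ofFn es, ∀ e₂ ∈ List.ofFn es, Compatible e₁ e₂ := by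
    simp only [List.mem_ofFn]
    rintro _ ⟨i, rfl⟩ _ ⟨j, rfl⟩
    exact hcompat i j
  have hjoin : ∀ i {v a}, es i v = some a → pjoinList (List.ofFn es) v = some a :=
    fun i _ _ => pjoinList_eq_some_of_mem hcompat' (List.mem_ofFn.mpr ⟨i, rfl⟩)
  refine ⟨fun v => ⟨fun hv => ?_, fun hv => ?_⟩, fun v hv hvar => ?_, fun t ht => ?_⟩
  · obtain ⟨_, hmem, hv⟩ := isSome_pjoinList_iff.mp hv
    obtain ⟨i, rfl⟩ := List.mem_ofFn.mp hmem
    exact nodes_mono (hsub i) (((hemb i).1 v).mp hv)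
  · obtain ⟨t, ht, hvt⟩ := hv
    obtain ⟨i, hti⟩ := hcover t ht
    exact isSome_pjoinList_iff.mpr
      ⟨es i, List.mem_ofFn.mpr ⟨i, rfl⟩, ((hemb i).1 v).mpr ⟨t, hti, hvt⟩⟩
  · obtain ⟨t, ht, hvt⟩ := hv
    obtain ⟨i, hti⟩ := hcover t ht
    exact hjoin i ((hemb i).2.1 v ⟨t, hti, hvt⟩ hvar)
  · obtain ⟨i, hti⟩ := hcover t ht
    obtain ⟨s', o', hs', ho', hG⟩ := (hemb i).2.2 t hti
    exact ⟨s', o', hjoin i hs', hjoin i ho', hG⟩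

end Embedding

section Decomposition

variable {Var : Set N} {Q : Set (Triple N P)} {Part : Set (Set N)}

lemma IsCVPartition.exists_mem (hPart : IsCVPartition Var Q Part) {v : N}
    (hv : v ∈ nodes Q) (hvar : v ∈ Var) : ∃ Pi ∈ Part, v ∈ Pi := by
  rw [← Set.mem_sUnion, hPart.2.1]
  exact ⟨hv, hvar⟩

lemma IsCVPartition.eq_of_mem_of_mem (hPart : IsCVPartition Var Q Part) {Pi Pj : Set N}
    (hPi : Pi ∈ Part) (hPj : Pj ∈ Part) {v : N} (hvi : v ∈ Pi) (hvj : v ∈ Pj) :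
    Pi = Pj := by
  by_contra hij
  exact (hPart.2.2.1 Pi hPi Pj hPj hij).ne_of_mem hvi hvj rfl

lemma IsCVPartition.eq_of_triple (hPart : IsCVPartition Var Q Part) {Pi Pj : Set N}
    (hPi : Pi ∈ Part) (hPj : Pj ∈ Part) {t : Triple N P} (ht : t ∈ Q)
    (hs : subj t ∈ Pi) (ho : obj t ∈ Pj) : Pi = Pj := by
  by_contra hij
  exact hPart.2.2.2.2 Pi hPi Pj hPj hij ⟨t, ht, Or.inl ⟨hs, ho⟩⟩

lemma IsCVPartition.mem_of_mem_nodes_classQuery (hPart : IsCVPartition Var Q Part)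
    {Pi : Set N} (hPi : Pi ∈ Part) {v : N} (hv : v ∈ nodes (classQuery Q Pi))
    (hvar : v ∈ Var) : v ∈ Pi := by
  obtain ⟨t, ⟨htQ, hcls⟩, hvt⟩ := hv
  obtain ⟨Pj, hPj, hvPj⟩ := hPart.exists_mem ⟨t, htQ, hvt⟩ hvar
  rcases hcls with hst | hot <;> rcases hvt with rfl | rfl
  · exact hst
  · rwa [hPart.eq_of_triple hPi hPj htQ hst hvPj]
  · rwa [hPart.eq_of_triple hPj hPi htQ hvPj hot] at hvPj
  · exact hot

lemma IsCVPartition.notMem_of_mem_nodes_groundRest (hPart : IsCVPartition Var Q Part)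
    {v : N} (hv : v ∈ nodes (groundRest Q Part)) : v ∉ Var := by
  intro hvar
  obtain ⟨t, ⟨htQ, htrest⟩, hvt⟩ := hv
  obtain ⟨Pi, hPi, hvPi⟩ := hPart.exists_mem ⟨t, htQ, hvt⟩ hvar
  refine htrest (Set.mem_biUnion hPi ⟨htQ, ?_⟩)
  rcases hvt with rfl | rfl
  exacts [Or.inl hvPi, Or.inr hvPi]

lemma subset_of_mem_DCV {Qi : Set (Triple N P)} (hQi : Qi ∈ DCV Q Part) : Qi ⊆ Q := by
  rcases hQi with ⟨Pi, _, rfl⟩ | ⟨rfl, _⟩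
  exacts [fun _ ht => ht.1, fun _ ht => ht.1]

lemma exists_mem_DCV_of_mem {t : Triple N P} (ht : t ∈ Q) :
    ∃ Qi ∈ DCV Q Part, t ∈ Qi := by
  by_cases hclass : t ∈ ⋃ Pi ∈ Part, classQuery Q Pi
  · obtain ⟨Pi, hPi, htPi⟩ := Set.mem_iUnion₂.mp hclass
    exact ⟨_, Or.inl ⟨Pi, hPi, rfl⟩, htPi⟩
  · exact ⟨_, Or.inr ⟨rfl, t, ht, hclass⟩, ht, hclass⟩

lemma IsCVPartition.notMem_of_mem_nodes_DCV (hPart : IsCVPartition Var Q Part)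
    {Q₁ Q₂ : Set (Triple N P)} (hQ₁ : Q₁ ∈ DCV Q Part) (hQ₂ : Q₂ ∈ DCV Q Part)
    (hne : Q₁ ≠ Q₂) {v : N} (hv₁ : v ∈ nodes Q₁) (hv₂ : v ∈ nodes Q₂) : v ∉ Var := by
  intro hvar
  rcases hQ₁ with ⟨P₁, hP₁, rfl⟩ | ⟨rfl, _⟩
  · rcases hQ₂ with ⟨P₂, hP₂, rfl⟩ | ⟨rfl, _⟩
    · exact hne (congrArg _ (hPart.eq_of_mem_of_mem hP₁ hP₂
        (hPart.mem_of_mem_nodes_classQuery hP₁ hv₁ hvar)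
        (hPart.mem_of_mem_nodes_classQuery hP₂ hv₂ hvar)))
    · exact hPart.notMem_of_mem_nodes_groundRest hv₂ hvar
  · exact hPart.notMem_of_mem_nodes_groundRest hv₁ hvar

lemma IsCVPartition.mem_or_ground_of_mem_nodes_DCV (hPart : IsCVPartition Var Q Part)
    {Qi : Set (Triple N P)} (hQi : Qi ∈ DCV Q Part) {t : Triple N P} (ht : t ∈ Q)
    (hs : subj t ∈ nodes Qi) (ho : obj t ∈ nodes Qi) :
    t ∈ Qi ∨ (subj t ∉ Var ∧ obj t ∉ Var) := by
  rcases hQi with ⟨Pi, hPi, rfl⟩ | ⟨rfl, _⟩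
  · by_cases hsvar : subj t ∈ Var
    · exact Or.inl ⟨ht, Or.inl (hPart.mem_of_mem_nodes_classQuery hPi hs hsvar)⟩
    by_cases hovar : obj t ∈ Var
    · exact Or.inl ⟨ht, Or.inr (hPart.mem_of_mem_nodes_classQuery hPi ho hovar)⟩
    exact Or.inr ⟨hsvar, hovar⟩
  · exact Or.inr ⟨hPart.notMem_of_mem_nodes_groundRest hs,
      hPart.notMem_of_mem_nodes_groundRest ho⟩

end Decomposition

end RDFBGP

open RDFBGP in
theorem dcv_embeddings_join_total_general {N P : Type} (Var : Set N)
    (Q G : Set (Triple N P)) (Part : Set (Set N))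
    (n : ℕ) (Qs : Fin n → Set (Triple N P)) (es : Fin n → N → Option N)
    (hPart : IsCVPartition Var Q Part)
    (hQsInj : Function.Injective Qs)
    (hQsRange : Set.range Qs = DCV Q Part)
    (hEmb : ∀ i, TotalEmb Var (Qs i) G (es i)) :
    (∀ i, PartialEmb Var Q G (es i)) ∧
    (∀ i j, i ≠ j → Compatible (es i) (es j)) ∧
    TotalEmb Var Q G (pjoinList (List.ofFn es)) := by
  have hDCV : ∀ i, Qs i ∈ DCV Q Part := fun i => hQsRange ▸ ⟨i, rfl⟩
  have hsub : ∀ i, Qs i ⊆ Q := fun i => subset_of_mem_DCV (hDCV i)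
  have hcover : ∀ t ∈ Q, ∃ i, t ∈ Qs i := by
    intro t ht
    obtain ⟨Qi, hQi, htQi⟩ := exists_mem_DCV_of_mem (Part := Part) ht
    obtain ⟨i, rfl⟩ := hQsRange ▸ hQi
    exact ⟨i, htQi⟩
  have hground : ∀ t ∈ Q, subj t ∉ Var → obj t ∉ Var → t ∈ G := fun t ht hs ho =>
    have ⟨i, hti⟩ := hcover t ht
    (hEmb i).mem_of_ground hti hs ho
  have hcompat : ∀ i j, Compatible (es i) (es j) := by
    intro i j
    rcases eq_or_ne i j with rfl | hij
    · exact compatible_refl _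
    · exact (hEmb i).compatible (hEmb j) fun v hvi hvj =>
        hPart.notMem_of_mem_nodes_DCV (hDCV i) (hDCV j) (hQsInj.ne hij) hvi hvj
  exact ⟨fun i => (hEmb i).partialEmb (hsub i)
      (fun _ ht => hPart.mem_or_ground_of_mem_nodes_DCV (hDCV i) ht) hground,
    fun i j _ => hcompat i j, totalEmb_pjoinList_ofFn hEmb hcompat hsub hcover⟩

open RDFBGP in
/-- total embeddings of the members of the connected-variable
decomposition of `Q` are pairwise compatible partial embeddings of `Q`, and their
join is a total embedding of `Q`. -/
theorem dcv_embeddings_join_total {N P : Type} (Uso Lit Var : Set N)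
    (hUsoInf : Uso.Infinite) (hUsoVar : Disjoint Uso Var)
    (hLitVar : Disjoint Lit Var) (hUsoLit : Disjoint Uso Lit)
    (Q G : Set (Triple N P)) (Part : Set (Set N))
    (n : ℕ) (Qs : Fin n → Set (Triple N P)) (es : Fin n → N → Option N)
    (hQ : IsBGP Uso Lit Var Q) (hG : IsDataGraph Uso Lit G)
    (hPart : IsCVPartition Var Q Part)
    (hQsInj : Function.Injective Qs)
    (hQsRange : Set.range Qs = DCV Q Part)
    (hEmb : ∀ i, TotalEmb Var (Qs i) G (es i)) :
    (∀ i, PartialEmb Var Q G (es i)) ∧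
    (∀ i j, i ≠ j → Compatible (es i) (es j)) ∧
    TotalEmb Var Q G (pjoinList (List.ofFn es)) :=
  dcv_embeddings_join_total_general Var Q G Part n Qs es hPart hQsInj hQsRange hEmb
end

section
/- Let G be a data graph, let Q be a BGP query, and let D_CV(Q) = (Q_1, Q_2, …, Q_n) be the connected-variable decomposition of Q. If e is a total embedding of Q in G, then there exist total embeddings e_1, e_2, …, e_n of Q_1, Q_2, …, Q_n respectively in G such that e = e_1 ⊗ e_2 ⊗ … ⊗ e_n. -/
section Aux
open RDFBGP

variable {N P : Type}

lemma aux_nodes_mono {Q Q' : Set (Triple N P)} (h : Q' ⊆ Q) : nodes Q' ⊆ nodes Q := by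
  rintro v ⟨t, ht, hv⟩
  exact ⟨t, h ht, hv⟩

lemma aux_dcv_subset {Q : Set (Triple N P)} {Part : Set (Set N)} {D : Set (Triple N P)}
    (hD : D ∈ DCV Q Part) : D ⊆ Q := by
  rcases hD with ⟨Pi, _, rfl⟩ | ⟨rfl, _⟩
  · exact fun t ht => ht.1
  · exact fun t ht => ht.1

lemma aux_pjoinList_agrees (g : N → Option N) (v : N) :
    ∀ l : List (N → Option N), (∀ f ∈ l, f v = none ∨ f v = g v) →
      pjoinList l v = none ∨ pjoinList l v = g v := by
  intro l
  induction l with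
  | nil => intro _; left; rfl
  | cons f l ih =>
    intro h
    have hf := h f (by simp)
    have hl := ih (fun f' hf' => h f' (by simp [hf']))
    rcases hf with hf | hf
    · simpa [pjoinList, pjoin, hf] using hl
    · right
      simp only [pjoinList, List.foldr] at hl ⊢
      cases hgv : g v with
      | some w => rw [hgv] at hf; simp [pjoin, hf]
      | none =>
        rw [hgv] at hf hl
        rcases hl with hl | hl <;> simp [pjoin, hf, hl]

lemma aux_pjoinList_isSome (v : N) :
    ∀ l : List (N → Option N), (pjoinList l v).isSome ↔ ∃ f ∈ l, (f v).isSome := by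
  intro l
  induction l with
  | nil => simp [pjoinList]
  | cons f l ih =>
    simp only [pjoinList, List.foldr] at ih ⊢
    cases hfv : f v with
    | none => simp [pjoin, hfv, ih]
    | some w => simp [pjoin, hfv]

end Aux

open RDFBGP in
/-- every total embedding of `Q` is the join of total embeddings of the
members of the connected-variable decomposition of `Q`. -/
theorem totalEmb_eq_join_of_dcv_embeddings {N P : Type} (Uso Lit Var : Set N)
    (hUsoInf : Uso.Infinite) (hUsoVar : Disjoint Uso Var)
    (hLitVar : Disjoint Lit Var) (hUsoLit : Disjoint Uso Lit)
    (Q G : Set (Triple N P)) (Part : Set (Set N))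
    (n : ℕ) (Qs : Fin n → Set (Triple N P)) (e : N → Option N)
    (hQ : IsBGP Uso Lit Var Q) (hG : IsDataGraph Uso Lit G)
    (hPart : IsCVPartition Var Q Part)
    (hQsInj : Function.Injective Qs)
    (hQsRange : Set.range Qs = DCV Q Part)
    (hEmb : TotalEmb Var Q G e) :
    ∃ es : Fin n → N → Option N,
      (∀ i, TotalEmb Var (Qs i) G (es i)) ∧ e = pjoinList (List.ofFn es) := by
  classical
  obtain ⟨hdom, hfix, htrip⟩ := hEmb
  -- the embeddings: restrictions of e to the nodes of each Qs i
  refine ⟨fun i => restrictTo (nodes (Qs i)) e, ?_, ?_⟩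
  · intro i
    have hQsub : Qs i ⊆ Q := by
      apply aux_dcv_subset (Part := Part)
      rw [← hQsRange]; exact ⟨i, rfl⟩
    have hnsub : nodes (Qs i) ⊆ nodes Q := aux_nodes_mono hQsub
    refine ⟨?_, ?_, ?_⟩
    · intro v
      constructor
      · intro h
        by_contra hv
        simp [restrictTo, hv] at h
      · intro hv
        simp only [restrictTo, if_pos hv]
        exact (hdom v).mpr (hnsub hv)
    · intro v hv hVar
      simp only [restrictTo, if_pos hv]
      exact hfix v (hnsub hv) hVar
    · intro t ht
      obtain ⟨s', o', hs, ho, hin⟩ := htrip t (hQsub ht)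
      have hsn : subj t ∈ nodes (Qs i) := ⟨t, ht, Or.inl rfl⟩
      have hon : obj t ∈ nodes (Qs i) := ⟨t, ht, Or.inr rfl⟩
      exact ⟨s', o', by simpa [restrictTo, hsn] using hs,
        by simpa [restrictTo, hon] using ho, hin⟩
  · -- every triple of Q lies in some member of the decomposition
    have hcover : ∀ t ∈ Q, ∃ D ∈ DCV Q Part, t ∈ D := by
      intro t ht
      by_cases hs : subj t ∈ Var
      · have hsv : subj t ∈ varsOf Var Q := ⟨⟨t, ht, Or.inl rfl⟩, hs⟩
        rw [← hPart.2.1] at hsv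
        obtain ⟨Pi, hPi, hsPi⟩ := hsv
        exact ⟨classQuery Q Pi, Or.inl ⟨Pi, hPi, rfl⟩, ht, Or.inl hsPi⟩
      · by_cases ho : obj t ∈ Var
        · have hov : obj t ∈ varsOf Var Q := ⟨⟨t, ht, Or.inr rfl⟩, ho⟩
          rw [← hPart.2.1] at hov
          obtain ⟨Pi, hPi, hoPi⟩ := hov
          exact ⟨classQuery Q Pi, Or.inl ⟨Pi, hPi, rfl⟩, ht, Or.inr hoPi⟩
        · have htg : t ∈ groundRest Q Part := by
            refine ⟨ht, ?_⟩
            intro hmem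
            simp only [Set.mem_iUnion] at hmem
            obtain ⟨Pi, hPi, ht', hor⟩ := hmem
            have hPisub : Pi ⊆ Var := by
              intro x hx
              have : x ∈ ⋃₀ Part := ⟨Pi, hPi, hx⟩
              rw [hPart.2.1] at this
              exact this.2
            rcases hor with h | h
            · exact hs (hPisub h)
            · exact ho (hPisub h)
          exact ⟨groundRest Q Part, Or.inr ⟨rfl, t, htg⟩, htg⟩
    have hcover' : ∀ v ∈ nodes Q, ∃ i, v ∈ nodes (Qs i) := by
      rintro v ⟨t, ht, hv⟩
      obtain ⟨D, hD, htD⟩ := hcover t ht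
      rw [← hQsRange] at hD
      obtain ⟨i, rfl⟩ := hD
      exact ⟨i, t, htD, hv⟩
    funext v
    set l := List.ofFn fun i => restrictTo (nodes (Qs i)) e with hl
    have hagree : ∀ f ∈ l, f v = none ∨ f v = e v := by
      intro f hf
      rw [hl, List.mem_ofFn] at hf
      obtain ⟨i, rfl⟩ := hf
      by_cases hv : v ∈ nodes (Qs i)
      · right; simp [restrictTo, hv]
      · left; simp [restrictTo, hv]
    by_cases hv : v ∈ nodes Q
    · obtain ⟨i, hi⟩ := hcover' v hv
      have hsome : (pjoinList l v).isSome := by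
        rw [aux_pjoinList_isSome]
        refine ⟨restrictTo (nodes (Qs i)) e, ?_, ?_⟩
        · rw [hl, List.mem_ofFn]; exact ⟨i, rfl⟩
        · simp only [restrictTo, if_pos hi]
          exact (hdom v).mpr hv
      rcases aux_pjoinList_agrees e v l hagree with h | h
      · rw [h] at hsome; simp at hsome
      · exact h.symm
    · have hnone : ¬ (pjoinList l v).isSome := by
        rw [aux_pjoinList_isSome]
        rintro ⟨f, hf, hfs⟩
        rw [hl, List.mem_ofFn] at hf
        obtain ⟨i, rfl⟩ := hf
        by_cases hvi : v ∈ nodes (Qs i)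
        · have hQsub : Qs i ⊆ Q := by
            apply aux_dcv_subset (Part := Part)
            rw [← hQsRange]; exact ⟨i, rfl⟩
          exact hv (aux_nodes_mono hQsub hvi)
        · simp [restrictTo, hvi] at hfs
      have h1 : e v = none := by
        cases he : e v with
        | none => rfl
        | some w => exact absurd ((hdom v).mp (by simp [he])) hv
      cases hpj : pjoinList l v with
      | none => rw [h1]
      | some w => rw [hpj] at hnone; simp at hnone
end

section
/- Let Q be a loosely-connected BGP query whose connected-variable decomposition D_CV(Q) consists of a ground query Q_G (possibly empty) and simple var-centric star queries Q_1, …, Q_n with central variables X_1, …, X_n respectively (X_1, …, X_n being exactly the variables of Q), and let G be a data graph. Then a tuple (c_1, …, c_n) is an answer of Q over G, i.e. there is a total embedding e of Q in G with e(X_i) = c_i for all i, if and only if Q_G ⊆ G and Q_i[X_i := c_i] ⊆ G for each i = 1, …, n, where Q_i[X_i := c_i] is the ground query obtained from Q_i by replacing every occurrence of X_i by c_i. -/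
open RDFBGP in
/-- answers of a loosely-connected query whose connected-variable
decomposition consists of a ground query `QG` and simple var-centric star queries
`Qs i` with central variables `Xs i` (exactly the variables of `Q`): a tuple
`(cs 1, …, cs n)` is an answer of `Q` over `G` iff `QG ⊆ G` and each ground instance
`Qs i [Xs i := cs i]` is contained in `G`. -/
theorem looselyConnected_answer_iff {N P : Type} (Uso Lit Var : Set N)
    (hUsoInf : Uso.Infinite) (hUsoVar : Disjoint Uso Var)
    (hLitVar : Disjoint Lit Var) (hUsoLit : Disjoint Uso Lit)
    (Q G QG : Set (Triple N P))
    (n : ℕ) (Qs : Fin n → Set (Triple N P)) (Xs : Fin n → N)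
    (hQ : IsBGP Uso Lit Var Q) (hG : IsDataGraph Uso Lit G)
    (hLC : LooselyConnected Var Q)
    (hXinj : Function.Injective Xs)
    (hXvars : varsOf Var Q = Set.range Xs)
    (hPart : IsCVPartition Var Q {Pi | ∃ i, Pi = {Xs i}})
    (hQs : ∀ i, Qs i = classQuery Q {Xs i})
    (hstar : ∀ i, Xs i ∈ nodes (Qs i) ∧
      (∀ t ∈ Qs i, subj t = Xs i ∨ obj t = Xs i) ∧
      (∀ t ∈ Qs i, (subj t = Xs i → obj t ∉ Var) ∧ (obj t = Xs i → subj t ∉ Var)))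
    (hQG : QG = Q \ ⋃ i, Qs i)
    (hQGground : Ground Var QG) :
    ∀ cs : Fin n → N,
      ((∃ e, TotalEmb Var Q G e ∧ ∀ i, e (Xs i) = some (cs i)) ↔
        (QG ⊆ G ∧ ∀ i, substQuery (Xs i) (cs i) (Qs i) ⊆ G)) := by
  classical
  intro cs
  have hXmem : ∀ i, Xs i ∈ varsOf Var Q := by
    intro i; rw [hXvars]; exact Set.mem_range_self i
  have hXVar : ∀ i, Xs i ∈ Var := fun i => (hXmem i).2
  have hXnodes : ∀ i, Xs i ∈ nodes Q := fun i => (hXmem i).1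
  have hQsQ : ∀ i, Qs i ⊆ Q := by
    intro i t ht; rw [hQs i] at ht; exact ht.1
  -- each triple of a star query has exactly one endpoint equal to the center,
  -- the other being a constant
  have hone : ∀ i, ∀ t ∈ Qs i,
      (subj t = Xs i ∧ obj t ≠ Xs i ∧ obj t ∉ Var) ∨
      (obj t = Xs i ∧ subj t ≠ Xs i ∧ subj t ∉ Var) := by
    intro i t ht
    rcases (hstar i).2.1 t ht with hs | ho
    · have hnV := ((hstar i).2.2 t ht).1 hs
      exact Or.inl ⟨hs, fun h => hnV (by rw [h]; exact hXVar i), hnV⟩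
    · have hnV := ((hstar i).2.2 t ht).2 ho
      exact Or.inr ⟨ho, fun h => hnV (by rw [h]; exact hXVar i), hnV⟩
  -- no variables occur in QG
  have hQGnv : ∀ t ∈ QG, subj t ∉ Var ∧ obj t ∉ Var := by
    intro t ht
    have h : varsOf Var QG = ∅ := hQGground
    constructor
    · intro hv
      have hmem : subj t ∈ varsOf Var QG :=
        Set.mem_inter ⟨t, ht, Or.inl rfl⟩ hv
      rw [h] at hmem; exact hmem
    · intro hv
      have hmem : obj t ∈ varsOf Var QG :=
        Set.mem_inter ⟨t, ht, Or.inr rfl⟩ hv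
      rw [h] at hmem; exact hmem
  -- computation of substTriple in the two star cases
  have hsub1 : ∀ (i : Fin n) (t : Triple N P), subj t = Xs i → obj t ≠ Xs i →
      substTriple (Xs i) (cs i) t = (cs i, pred t, obj t) := by
    intro i t hs hno
    have hs' : t.1 = Xs i := hs
    have hno' : ¬ t.2.2 = Xs i := hno
    simp only [substTriple, if_pos hs', if_neg hno']
    rfl
  have hsub2 : ∀ (i : Fin n) (t : Triple N P), obj t = Xs i → subj t ≠ Xs i →
      substTriple (Xs i) (cs i) t = (subj t, pred t, cs i) := by
    intro i t ho hns
    have ho' : t.2.2 = Xs i := ho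
    have hns' : ¬ t.1 = Xs i := hns
    simp only [substTriple, if_pos ho', if_neg hns']
    rfl
  constructor
  · rintro ⟨e, ⟨he1, he2, he3⟩, heX⟩
    constructor
    · -- QG ⊆ G
      intro t ht
      have htQ : t ∈ Q := by
        rw [hQG] at ht; exact ht.1
      obtain ⟨hsnv, honv⟩ := hQGnv t ht
      have hes : e (subj t) = some (subj t) := he2 _ ⟨t, htQ, Or.inl rfl⟩ hsnv
      have heo : e (obj t) = some (obj t) := he2 _ ⟨t, htQ, Or.inr rfl⟩ honv
      obtain ⟨s', o', h1, h2, h3⟩ := he3 t htQ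
      rw [hes] at h1; rw [heo] at h2
      obtain rfl : subj t = s' := Option.some_inj.mp h1
      obtain rfl : obj t = o' := Option.some_inj.mp h2
      exact h3
    · -- each substituted star query is in G
      intro i t' ht'
      obtain ⟨t, ht, rfl⟩ := ht'
      have htQ : t ∈ Q := hQsQ i ht
      obtain ⟨s', o', h1, h2, h3⟩ := he3 t htQ
      rcases hone i t ht with ⟨hs, hno, hnV⟩ | ⟨ho, hns, hnV⟩
      · have hes : e (subj t) = some (cs i) := by rw [hs]; exact heX i
        have heo : e (obj t) = some (obj t) := he2 _ ⟨t, htQ, Or.inr rfl⟩ hnV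
        rw [hes] at h1; rw [heo] at h2
        obtain rfl : cs i = s' := Option.some_inj.mp h1
        obtain rfl : obj t = o' := Option.some_inj.mp h2
        rw [hsub1 i t hs hno]
        exact h3
      · have heo : e (obj t) = some (cs i) := by rw [ho]; exact heX i
        have hes : e (subj t) = some (subj t) := he2 _ ⟨t, htQ, Or.inl rfl⟩ hnV
        rw [hes] at h1; rw [heo] at h2
        obtain rfl : subj t = s' := Option.some_inj.mp h1
        obtain rfl : cs i = o' := Option.some_inj.mp h2
        rw [hsub2 i t ho hns]
        exact h3
  · rintro ⟨hG1, hG2⟩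
    refine ⟨fun v => if h : ∃ i, Xs i = v then some (cs h.choose)
      else if v ∈ nodes Q then some v else none, ?_, ?_⟩
    · refine ⟨?_, ?_, ?_⟩
      · -- defined exactly on nodes of Q
        intro v
        constructor
        · intro h
          by_cases hex : ∃ i, Xs i = v
          · obtain ⟨i, rfl⟩ := hex; exact hXnodes i
          · simp only [dif_neg hex] at h
            by_cases hv : v ∈ nodes Q
            · exact hv
            · rw [if_neg hv] at h; simp at h
        · intro hv
          by_cases hex : ∃ i, Xs i = v
          · simp [dif_pos hex]
          · simp [dif_neg hex, if_pos hv]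
      · -- fixes constants
        intro v hv hvV
        have hne : ¬ ∃ i, Xs i = v := by
          rintro ⟨i, rfl⟩; exact hvV (hXVar i)
        simp only [dif_neg hne, if_pos hv]
      · -- maps triples into G
        intro t ht
        have heconst : ∀ v ∈ nodes Q, v ∉ Var →
            (fun v => if h : ∃ i, Xs i = v then some (cs h.choose)
              else if v ∈ nodes Q then some v else none) v = some v := by
          intro v hv hvV
          have hne : ¬ ∃ i, Xs i = v := by
            rintro ⟨i, rfl⟩; exact hvV (hXVar i)
          simp only [dif_neg hne, if_pos hv]
        have heX' : ∀ i,
            (fun v => if h : ∃ i, Xs i = v then some (cs h.choose)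
              else if v ∈ nodes Q then some v else none) (Xs i) = some (cs i) := by
          intro i
          have h : ∃ j, Xs j = Xs i := ⟨i, rfl⟩
          simp only [dif_pos h]
          exact congrArg some (congrArg cs (hXinj h.choose_spec))
        by_cases ht' : t ∈ ⋃ i, Qs i
        · obtain ⟨s, ⟨i, rfl⟩, hti⟩ := ht'
          rcases hone i t hti with ⟨hs, hno, hnV⟩ | ⟨ho, hns, hnV⟩
          · refine ⟨cs i, obj t, by rw [hs]; exact heX' i,
              heconst _ ⟨t, ht, Or.inr rfl⟩ hnV, ?_⟩
            have := hG2 i ⟨t, hti, rfl⟩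
            rwa [hsub1 i t hs hno] at this
          · refine ⟨subj t, cs i, heconst _ ⟨t, ht, Or.inl rfl⟩ hnV,
              by rw [ho]; exact heX' i, ?_⟩
            have := hG2 i ⟨t, hti, rfl⟩
            rwa [hsub2 i t ho hns] at this
        · have htG : t ∈ QG := by rw [hQG]; exact ⟨ht, ht'⟩
          obtain ⟨hsnv, honv⟩ := hQGnv t htG
          exact ⟨subj t, obj t, heconst _ ⟨t, ht, Or.inl rfl⟩ hsnv,
            heconst _ ⟨t, ht, Or.inr rfl⟩ honv, hG1 htG⟩
    · intro i
      have h : ∃ j, Xs j = Xs i := ⟨i, rfl⟩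
      simp only [dif_pos h]
      exact congrArg some (congrArg cs (hXinj h.choose_spec))
end
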